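/- Let (F, η): C → C' be an exact monoidal functor between exact monoidal categories, P a power flat projective resolution of the unit 1 in C, Δ_P a diagonal map, f: P_m → 1 an m-cocycle, and ψ_f a homotopy lifting of (f, Δ_P). Then F(ψ_f) is a homotopy lifting of (F(f), Δ_{P'}), where P' = F(P) and Δ_{P'} = η⁻¹_{P,P} F(Δ_P). -/

import Mathlib

/-!
Every condition defining a homotopy lifting is an equation between composites of
`d`, `μ_P`, `Δ_P`, `f`, `ψ` and `ψ_f` built with sums, integer multiples, whiskering and
unitors. An additive monoidal functor preserves each of these operations, and the
comparison maps of `F` cancel between `Δ_{P'} = δ ∘ F(Δ_P)` and the unitors, so applying `F`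
to the equations for `ψ_f` yields the equations for `F(ψ_f)`.
-/

open CategoryTheory CategoryTheory.Limits MonoidalCategory

universe v v' u u'

namespace CategoryTheory.Functor.OplaxMonoidal

variable {C D : Type*} [Category C] [MonoidalCategory C] [Category D] [MonoidalCategory D]
  (F : C ⥤ D) [F.OplaxMonoidal]

theorem map_whiskerRight_comp_map_leftUnitor_hom {A : C} (f : A ⟶ 𝟙_ C) (X : C) :
    F.map (f ▷ X) ≫ F.map (λ_ X).hom =
      δ F A X ≫ (F.map f ≫ η F) ▷ F.obj X ≫ (λ_ (F.obj X)).hom := by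
  rw [comp_whiskerRight, Category.assoc, δ_natural_left_assoc, left_unitality_hom]

theorem map_whiskerLeft_comp_map_rightUnitor_hom {A : C} (f : A ⟶ 𝟙_ C) (X : C) :
    F.map (X ◁ f) ≫ F.map (ρ_ X).hom =
      δ F X A ≫ F.obj X ◁ (F.map f ≫ η F) ≫ (ρ_ (F.obj X)).hom := by
  rw [MonoidalCategory.whiskerLeft_comp, Category.assoc, δ_natural_right_assoc,
    right_unitality_hom]

end CategoryTheory.Functor.OplaxMonoidal

open Functor.OplaxMonoidal in
theorem stmt7
    (C : Type u) [Category.{v} C] [Abelian C] [MonoidalCategory C]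
    (C' : Type u') [Category.{v'} C'] [Abelian C'] [MonoidalCategory C']
    (F : C ⥤ C') [F.Monoidal]
    [PreservesFiniteLimits F]
    -- a projective resolution `P → 1` in `C`
    (P : ℕ → C)
    (d : ∀ i, P (i + 1) ⟶ P i) (μP : P 0 ⟶ 𝟙_ C)
    -- a diagonal map `Δ : P → P ⊗ P`, lifting `1 ≅ 1 ⊗ 1`
    (Δ : ∀ m i j, i + j = m → (P m ⟶ P i ⊗ P j))
    -- the map `ψ` of equation (2): `∂(ψ) = (μ_P ⊗ 1 − 1 ⊗ μ_P) Δ_P`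
    (ψ : ∀ l, P l ⟶ P (l + 1))
    (hψ0 : ψ 0 ≫ d 0 =
      Δ 0 0 0 rfl ≫ (μP ▷ P 0) ≫ (λ_ (P 0)).hom -
        Δ 0 0 0 rfl ≫ (P 0 ◁ μP) ≫ (ρ_ (P 0)).hom)
    (hψsucc : ∀ l, ψ (l + 1) ≫ d (l + 1) + d l ≫ ψ l =
      Δ (l + 1) 0 (l + 1) (by omega) ≫ (μP ▷ P (l + 1)) ≫ (λ_ (P (l + 1))).hom -
        Δ (l + 1) (l + 1) 0 (by omega) ≫ (P (l + 1) ◁ μP) ≫ (ρ_ (P (l + 1))).hom)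
    -- a cocycle `f : P_{m'+1} ⟶ 1`
    (m' : ℕ) (f : P (m' + 1) ⟶ 𝟙_ C)
    -- a homotopy lifting `ψf` of `(f, Δ)`: equation (1) ...
    (ψf : ∀ i j, j + m' = i → (P i ⟶ P j))
    (hψf : ∀ j, ψf (j + m' + 1) (j + 1) (by omega) ≫ d j -
        ((-1 : ℤ) ^ m') • (d (j + m') ≫ ψf (j + m') j (by omega)) =
      Δ (j + m' + 1) (m' + 1) j (by omega) ≫ (f ▷ P j) ≫ (λ_ (P j)).hom -
        ((-1 : ℤ) ^ ((m' + 1) * j)) •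
          (Δ (j + m' + 1) j (m' + 1) (by omega) ≫ (P j ◁ f) ≫ (ρ_ (P j)).hom))
    -- ... and `μ_P ψ_f ∼ (−1)^{m+1} f ψ`
    (hψf_htpy :
      (m' = 0 → ψf m' 0 (by omega) ≫ μP =
        ((-1 : ℤ) ^ (m' + 1 + 1)) • (ψ m' ≫ f)) ∧
      (∀ j' (hj : m' = j' + 1), ∃ θ : P j' ⟶ 𝟙_ C,
        ψf m' 0 (by omega) ≫ μP -
            ((-1 : ℤ) ^ (m' + 1 + 1)) • (ψ m' ≫ f) =
          eqToHom (congrArg P hj) ≫ d j' ≫ θ)) :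
    -- conclusion: `F(ψf)` is a homotopy lifting of `(F(f), Δ')`, where
    -- `Δ' = η⁻¹ ∘ F(Δ)`, `μ' = F(μ)` (composed with `F(1) ≅ 1'`), etc.
    letI P' : ℕ → C' := fun i => F.obj (P i)
    letI d' : ∀ i, P' (i + 1) ⟶ P' i := fun i => F.map (d i)
    letI μ' : P' 0 ⟶ 𝟙_ C' := F.map μP ≫ Functor.OplaxMonoidal.η F
    letI Δ' : ∀ m i j, i + j = m → (P' m ⟶ P' i ⊗ P' j) := fun m i j h =>
      F.map (Δ m i j h) ≫ Functor.OplaxMonoidal.δ F (P i) (P j)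
    letI f' : P' (m' + 1) ⟶ 𝟙_ C' := F.map f ≫ Functor.OplaxMonoidal.η F
    letI ψ' : ∀ l, P' l ⟶ P' (l + 1) := fun l => F.map (ψ l)
    letI ψf' : ∀ i j, j + m' = i → (P' i ⟶ P' j) := fun i j h => F.map (ψf i j h)
    -- equation (1) for `(F(f), Δ')`:
    (∀ j, ψf' (j + m' + 1) (j + 1) (by omega) ≫ d' j -
        ((-1 : ℤ) ^ m') • (d' (j + m') ≫ ψf' (j + m') j (by omega)) =
      Δ' (j + m' + 1) (m' + 1) j (by omega) ≫ (f' ▷ P' j) ≫ (λ_ (P' j)).hom -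
        ((-1 : ℤ) ^ ((m' + 1) * j)) •
          (Δ' (j + m' + 1) j (m' + 1) (by omega) ≫ (P' j ◁ f') ≫ (ρ_ (P' j)).hom)) ∧
    -- `ψ' = F(ψ)` satisfies equation (2) for `Δ'`:
    (ψ' 0 ≫ d' 0 =
      Δ' 0 0 0 rfl ≫ (μ' ▷ P' 0) ≫ (λ_ (P' 0)).hom -
        Δ' 0 0 0 rfl ≫ (P' 0 ◁ μ') ≫ (ρ_ (P' 0)).hom) ∧
    (∀ l, ψ' (l + 1) ≫ d' (l + 1) + d' l ≫ ψ' l =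
      Δ' (l + 1) 0 (l + 1) (by omega) ≫ (μ' ▷ P' (l + 1)) ≫ (λ_ (P' (l + 1))).hom -
        Δ' (l + 1) (l + 1) 0 (by omega) ≫ (P' (l + 1) ◁ μ') ≫ (ρ_ (P' (l + 1))).hom) ∧
    -- and `μ_{P'} F(ψ_f) ∼ (−1)^{m+1} F(f) ψ'`:
    ((m' = 0 → ψf' m' 0 (by omega) ≫ μ' =
        ((-1 : ℤ) ^ (m' + 1 + 1)) • (ψ' m' ≫ f')) ∧
      (∀ j' (hj : m' = j' + 1), ∃ θ' : P' j' ⟶ 𝟙_ C',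
        ψf' m' 0 (by omega) ≫ μ' -
            ((-1 : ℤ) ^ (m' + 1 + 1)) • (ψ' m' ≫ f') =
          eqToHom (congrArg P' hj) ≫ d' j' ≫ θ')) := by
  have : F.Additive := Functor.additive_of_preserves_binary_products F
  refine ⟨fun j => ?_, ?_, fun l => ?_, fun hm => ?_, fun j' hj => ?_⟩
  · simpa only [Functor.map_sub, Functor.map_zsmul, map_whiskerRight_comp_map_leftUnitor_hom,
      map_whiskerLeft_comp_map_rightUnitor_hom, Functor.map_comp, Category.assoc]
      using congrArg F.map (hψf j)
  · simpa only [Functor.map_sub, map_whiskerRight_comp_map_leftUnitor_hom,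
      map_whiskerLeft_comp_map_rightUnitor_hom, Functor.map_comp, Category.assoc]
      using congrArg F.map hψ0
  · simpa only [Functor.map_add, Functor.map_sub, map_whiskerRight_comp_map_leftUnitor_hom,
      map_whiskerLeft_comp_map_rightUnitor_hom, Functor.map_comp, Category.assoc]
      using congrArg F.map (hψsucc l)
  · simpa only [Functor.map_comp, Functor.map_zsmul, Preadditive.zsmul_comp, Category.assoc]
      using congrArg (F.map · ≫ η F) (hψf_htpy.1 hm)
  · obtain ⟨θ, hθ⟩ := hψf_htpy.2 j' hj
    refine ⟨F.map θ ≫ η F, ?_⟩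
    simpa only [Functor.map_sub, Functor.map_zsmul, Functor.map_comp, Preadditive.sub_comp,
      Preadditive.zsmul_comp, Category.assoc, eqToHom_map]
      using congrArg (F.map · ≫ η F) hθ
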